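/- arXiv:1603.04393 — 5 statements merged into one kernel-verified Lean document; each statement's English description precedes it below -/
import Mathlib

section
/- Define the three maps on data (a₁,a₂,a₃,a₄,σ,y,z) ∈ ℂ⁷ (with t ∈ ℂ a fixed nonzero parameter, assuming all denominators appearing are nonzero): S₁ : (a₁,a₂,a₃,a₄,σ,y,z) ↦ (−a₁−σ, −a₂−σ, −a₃−σ, −a₄−σ, σ−1, (t/y)·(z−a₃)(z−a₄)/((z−a₁)(z−a₂)), −σ−z); S₂ : (a₁,a₂,a₃,a₄,σ,y,z) ↦ (a₁, a₂, −a₃−σ−1, −a₄−σ−1, σ, y, z + t(1+σ+a₃+a₄)/(y−t)); S₃ : (a₁,a₂,a₃,a₄,σ,y,z) ↦ (−a₁−σ, −a₂−σ, a₃, a₄, σ, y, z − (σ+a₁+a₂)y/(y−1)). Then the composition S₂ ∘ S₃ ∘ S₁ sends (a₁,a₂,a₃,a₄,σ,y,z) to (a₁+1, a₂+1, a₃, a₄, σ−1, ỹ, z̃), where ỹ and z̃ satisfy: y·ỹ = t(z−a₃)(z−a₄)/((z−a₁)(z−a₂)) and z̃ + z = a₁+a₂+1 − (a₃t+a₄t+σt)/(ỹ−t)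 + (a₁+a₂+σ+1)/(ỹ−1). -/
/-! The parameters and the `y`-component of `S₂ ∘ S₃ ∘ S₁` follow by substitution; the
`y`-component is simply that of `S₁`. In the `z`-component the `t`-dependent correction of `S₂`
cancels against the right-hand side, and what remains is `c ỹ / (ỹ - 1) = c + c / (ỹ - 1)`. -/

/-- The symmetry `S₁` of the symmetric Lax pair for Painlevé VI. -/
noncomputable def S1 (t : ℂ) : ℂ × ℂ × ℂ × ℂ × ℂ × ℂ × ℂ → ℂ × ℂ × ℂ × ℂ × ℂ × ℂ × ℂ :=
  fun (a1, a2, a3, a4, σ, y, z) =>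
    (-a1 - σ, -a2 - σ, -a3 - σ, -a4 - σ, σ - 1,
      t / y * ((z - a3) * (z - a4) / ((z - a1) * (z - a2))), -σ - z)

/-- The symmetry `S₂`. -/
noncomputable def S2 (t : ℂ) : ℂ × ℂ × ℂ × ℂ × ℂ × ℂ × ℂ → ℂ × ℂ × ℂ × ℂ × ℂ × ℂ × ℂ :=
  fun (a1, a2, a3, a4, σ, y, z) =>
    (a1, a2, -a3 - σ - 1, -a4 - σ - 1, σ, y,
      z + t * (1 + σ + a3 + a4) / (y - t))

/-- The symmetry `S₃`. -/
noncomputable def S3 (_t : ℂ) : ℂ × ℂ × ℂ × ℂ × ℂ × ℂ × ℂ → ℂ × ℂ × ℂ × ℂ × ℂ × ℂ × ℂ :=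
  fun (a1, a2, a3, a4, σ, y, z) =>
    (-a1 - σ, -a2 - σ, a3, a4, σ, y, z - (σ + a1 + a2) * y / (y - 1))

theorem S2_S3_S1_apply (t a1 a2 a3 a4 σ y z : ℂ) :
    let ytil := t / y * ((z - a3) * (z - a4) / ((z - a1) * (z - a2)))
    S2 t (S3 t (S1 t (a1, a2, a3, a4, σ, y, z))) =
      (a1 + 1, a2 + 1, a3, a4, σ - 1, ytil,
        -σ - z + (1 + a1 + a2 + σ) * ytil / (ytil - 1) - (a3 + a4 + σ) * t / (ytil - t)) := by
  simp only [S1, S2, S3, Prod.mk.injEq]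
  exact ⟨by ring, by ring, by ring, by ring, trivial, trivial, by ring⟩

theorem mul_div_sub_one_eq_add_div {K : Type*} [Field K] (c w : K) (hw : w - 1 ≠ 0) :
    c * w / (w - 1) = c + c / (w - 1) := by
  field_simp
  ring

theorem stmt_8_general (t a1 a2 a3 a4 σ y z ytil : ℂ)
    (hy : y ≠ 0)
    (hytil : ytil = t / y * ((z - a3) * (z - a4) / ((z - a1) * (z - a2))))
    (hy1 : ytil - 1 ≠ 0) :
    ∃ ztil : ℂ,
      S2 t (S3 t (S1 t (a1, a2, a3, a4, σ, y, z))) =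
        (a1 + 1, a2 + 1, a3, a4, σ - 1, ytil, ztil) ∧
      y * ytil = t * (z - a3) * (z - a4) / ((z - a1) * (z - a2)) ∧
      ztil + z = a1 + a2 + 1 - (a3 * t + a4 * t + σ * t) / (ytil - t)
        + (a1 + a2 + σ + 1) / (ytil - 1) := by
  refine ⟨_, hytil ▸ S2_S3_S1_apply t a1 a2 a3 a4 σ y z, ?_, ?_⟩
  · rw [hytil, ← mul_assoc, mul_div_cancel₀ t hy, ← mul_div_assoc, ← mul_assoc]
  · rw [mul_div_sub_one_eq_add_div _ _ hy1]
    ring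

/-- the composition `S₂ ∘ S₃ ∘ S₁` is the discrete Painlevé V
evolution. -/
theorem stmt_8 (t a1 a2 a3 a4 σ y z ytil : ℂ)
    (ht : t ≠ 0) (hy : y ≠ 0) (h1 : z - a1 ≠ 0) (h2 : z - a2 ≠ 0)
    (hytil : ytil = t / y * ((z - a3) * (z - a4) / ((z - a1) * (z - a2))))
    (hyt : ytil - t ≠ 0) (hy1 : ytil - 1 ≠ 0) :
    ∃ ztil : ℂ,
      S2 t (S3 t (S1 t (a1, a2, a3, a4, σ, y, z))) =
        (a1 + 1, a2 + 1, a3, a4, σ - 1, ytil, ztil) ∧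
      y * ytil = t * (z - a3) * (z - a4) / ((z - a1) * (z - a2)) ∧
      ztil + z = a1 + a2 + 1 - (a3 * t + a4 * t + σ * t) / (ytil - t)
        + (a1 + a2 + σ + 1) / (ytil - 1) :=
  stmt_8_general t a1 a2 a3 a4 σ y z ytil hy hytil hy1
end

section
/- Let a₁, a₂, a₃, a₄, σ, t ∈ ℂ with t ∉ {0,1}, and let y, z : I → ℂ be differentiable functions on a real interval I (where t varies over I, i.e. t is the independent variable), with y(t) ∉ {0, 1, t} for all t. Set ζ₁ = a₁+a₂+a₃+a₄, y₁ = (z−a₁)(z−a₂)·y, y₂ = t(z−a₃)(z−a₄)/y. Suppose z' = (y₁ − y₂)/(t(t−1)) and y' = (y²(a₁+a₂−2z) + t(a₃+a₄−2z) + y(σ − t(ζ₁+σ−2z) + 2z))/(t(t−1)). Then y satisfies the sixth Painlevé equation y'' = (1/2)(1/y + 1/(y−1) + 1/(y−t))(y')² − (1/t + 1/(t−1) + 1/(y−t))y' + (y(y−1)(y−t)/(t²(t−1)²))·(α + βt/y² + γ(t−1)/(y−1)² + δt(t−1)/(y−t)²), with α = (a₁−a₂)²/2, β = −(a₃−a₄)²/2,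 γ = (a₁+a₂+σ)²/2, δ = −(a₃+a₄+σ)(2+a₃+a₄+σ)/2. -/
/-!
Differentiating `y' = N(t, y, z) / (t (t - 1))` by the chain rule expresses `y''` through
`t, y, z, y', z'`. Substituting both first-order equations turns `y''` and the right-hand side of
`P_VI` into rational functions of `t, y, z`, and these agree identically in `z`, so `z` drops out.
-/

namespace PainleveVI

noncomputable def painleveVIRhs (α β γ δ T Y dY : ℂ) : ℂ :=
  (1/2) * (1 / Y + 1 / (Y - 1) + 1 / (Y - T)) * dY^2
    - (1 / T + 1 / (T - 1) + 1 / (Y - T)) * dY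
    + (Y * (Y - 1) * (Y - T) / ((T - 1)^2 * T^2)) *
      (α + β * T / Y^2 + γ * (T - 1) / (Y - 1)^2 + δ * (T - 1) * T / (Y - T)^2)

variable (a1 a2 a3 a4 σ : ℂ)

def yDerivNum (T Y Z : ℂ) : ℂ :=
  Y^2 * (a1 + a2 - 2 * Z) + T * (a3 + a4 - 2 * Z)
    + Y * (σ - T * ((a1 + a2 + a3 + a4) + σ - 2 * Z) + 2 * Z)

/-- The quotient rule applied to `yDerivNum T Y Z / (T (T - 1))` along a path with velocity
`(1, dY, dZ)`; the three partial derivatives of `yDerivNum` appear in the first factor. -/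
noncomputable def ySecondDeriv (T Y Z dY dZ : ℂ) : ℂ :=
  (((a3 + a4 - 2 * Z) - Y * ((a1 + a2 + a3 + a4) + σ - 2 * Z)
      + (2 * Y * (a1 + a2 - 2 * Z) + σ - T * ((a1 + a2 + a3 + a4) + σ - 2 * Z) + 2 * Z) * dY
      - 2 * (Y - 1) * (Y - T) * dZ) * (T * (T - 1))
    - yDerivNum a1 a2 a3 a4 σ T Y Z * (2 * T - 1)) / (T * (T - 1))^2

theorem hasDerivAt_yDerivNum_div {y z : ℝ → ℂ} {y' z' : ℂ} {t : ℝ}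
    (hy : HasDerivAt y y' t) (hz : HasDerivAt z z' t) (ht0 : (t : ℂ) ≠ 0) (ht1 : (t : ℂ) ≠ 1) :
    HasDerivAt (fun s : ℝ => yDerivNum a1 a2 a3 a4 σ s (y s) (z s) / (s * (s - 1)))
      (ySecondDeriv a1 a2 a3 a4 σ t (y t) (z t) y' z') t := by
  have hs : HasDerivAt (fun s : ℝ => (s : ℂ)) 1 t := (hasDerivAt_id t).ofReal_comp
  have hlin (c : ℂ) : HasDerivAt (fun s => c - 2 * z s) (-(2 * z')) t :=
    (hz.const_mul 2).const_sub c
  have hnum := (((hy.fun_pow 2).fun_mul (hlin (a1 + a2))).fun_add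
    (hs.fun_mul (hlin (a3 + a4)))).fun_add
    (hy.fun_mul (((hs.fun_mul (hlin (a1 + a2 + a3 + a4 + σ))).const_sub σ).fun_add
      (hz.const_mul 2)))
  refine (hnum.fun_div (hs.fun_mul (hs.sub_const 1))
    (mul_ne_zero ht0 (sub_ne_zero_of_ne ht1))).congr_deriv ?_
  unfold ySecondDeriv yDerivNum
  push_cast
  ring

theorem ySecondDeriv_eq_painleveVIRhs {T Y Z dY dZ : ℂ} (hT0 : T ≠ 0) (hT1 : T ≠ 1)
    (hY0 : Y ≠ 0) (hY1 : Y ≠ 1) (hYT : Y ≠ T)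
    (hdY : dY = yDerivNum a1 a2 a3 a4 σ T Y Z / (T * (T - 1)))
    (hdZ : dZ = ((Z - a1) * (Z - a2) * Y - T * (Z - a3) * (Z - a4) / Y) / (T * (T - 1))) :
    ySecondDeriv a1 a2 a3 a4 σ T Y Z dY dZ
      = painleveVIRhs ((a1 - a2)^2 / 2) (-(a3 - a4)^2 / 2) ((a1 + a2 + σ)^2 / 2)
          (-((a3 + a4 + σ) * (2 + a3 + a4 + σ)) / 2) T Y dY := by
  have hT1' : T - 1 ≠ 0 := sub_ne_zero_of_ne hT1
  have hY1' : Y - 1 ≠ 0 := sub_ne_zero_of_ne hY1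
  have hYT' : Y - T ≠ 0 := sub_ne_zero_of_ne hYT
  subst hdY hdZ
  unfold ySecondDeriv painleveVIRhs yDerivNum
  field_simp
  ring

end PainleveVI

/-- eliminating `z` from the isomonodromy system of the symmetric
Lax pair yields the sixth Painlevé equation. -/
theorem stmt_9 (a1 a2 a3 a4 σ : ℂ) (I : Set ℝ) (hI : IsOpen I) (y z : ℝ → ℂ)
    (hyd : ∀ t ∈ I, DifferentiableAt ℝ y t)
    (hzd : ∀ t ∈ I, DifferentiableAt ℝ z t)
    (ht0 : ∀ t ∈ I, (t : ℂ) ≠ 0) (ht1 : ∀ t ∈ I, (t : ℂ) ≠ 1)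
    (hy0 : ∀ t ∈ I, y t ≠ 0) (hy1 : ∀ t ∈ I, y t ≠ 1)
    (hyt : ∀ t ∈ I, y t ≠ (t : ℂ))
    (hz' : ∀ t ∈ I, deriv z t =
      ((z t - a1) * (z t - a2) * y t - (t : ℂ) * (z t - a3) * (z t - a4) / y t)
        / ((t : ℂ) * ((t : ℂ) - 1)))
    (hy' : ∀ t ∈ I, deriv y t =
      ((y t)^2 * (a1 + a2 - 2 * z t) + (t : ℂ) * (a3 + a4 - 2 * z t)
        + y t * (σ - (t : ℂ) * ((a1 + a2 + a3 + a4) + σ - 2 * z t) + 2 * z t))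
        / ((t : ℂ) * ((t : ℂ) - 1))) :
    ∀ t ∈ I, deriv (deriv y) t =
      (1/2) * (1 / y t + 1 / (y t - 1) + 1 / (y t - (t : ℂ))) * (deriv y t)^2
      - (1 / (t : ℂ) + 1 / ((t : ℂ) - 1) + 1 / (y t - (t : ℂ))) * deriv y t
      + (y t * (y t - 1) * (y t - (t : ℂ)) / (((t : ℂ) - 1)^2 * (t : ℂ)^2)) *
        ((a1 - a2)^2 / 2
          + (-(a3 - a4)^2 / 2) * (t : ℂ) / (y t)^2
          + ((a1 + a2 + σ)^2 / 2) * ((t : ℂ) - 1) / (y t - 1)^2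
          + (-((a3 + a4 + σ) * (2 + a3 + a4 + σ)) / 2) * ((t : ℂ) - 1) * (t : ℂ)
              / (y t - (t : ℂ))^2) := by
  intro t ht
  have hy'_nhds : deriv y =ᶠ[nhds t]
      fun s : ℝ => PainleveVI.yDerivNum a1 a2 a3 a4 σ s (y s) (z s) / (s * (s - 1)) := by
    filter_upwards [hI.mem_nhds ht] with s hs using hy' s hs
  rw [hy'_nhds.deriv_eq, (PainleveVI.hasDerivAt_yDerivNum_div a1 a2 a3 a4 σ (hyd t ht).hasDerivAt
    (hzd t ht).hasDerivAt (ht0 t ht) (ht1 t ht)).deriv]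
  exact PainleveVI.ySecondDeriv_eq_painleveVIRhs a1 a2 a3 a4 σ (ht0 t ht) (ht1 t ht) (hy0 t ht)
    (hy1 t ht) (hyt t ht) (hy' t ht) (hz' t ht)
end

section
/- Let a₁, a₂, a₃ ∈ ℂ and let y, z : I → ℂ be differentiable on a real interval I with independent variable t ≠ 0, y(t) ∉ {0,1}. Set y₁ = (1−y)(z−a₂)(z−a₃) and y₂ = t(z−a₁)/(1−y). Suppose y' = ((a₂+a₃)(y−1)² − ty)/t − 2(y−1)yz/t and z' = (y₂ − y₁)/t. Then y satisfies the fifth Painlevé equation y'' = (1/(2y) + 1/(y−1))(y')² − y'/t + ((y−1)²/t²)(αy + β/y) + γy/t − (1/2)·y(y+1)/(y−1), with α = (a₂−a₃)²/2, β = −(a₂+a₃)²/2, γ = −1−2a₁. -/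
/-!
Along a solution, `y''` is the derivative of the right-hand side `F(t, y, z)` of the `y`-equation,
computed by the chain rule with `z'` taken from the `z`-equation. Substituting `y' = F(t, y, z)`
on the `P_V` side as well, the claim becomes an identity of rational functions of `t, y, z`,
valid where `t`, `y` and `y - 1` are nonzero.
-/

open Filter Topology

noncomputable section

def symLaxYRhs (a2 a3 T Y Z : ℂ) : ℂ :=
  ((a2 + a3) * (Y - 1) ^ 2 - T * Y) / T - 2 * (Y - 1) * Y * Z / T

def symLaxZRhs (a1 a2 a3 T Y Z : ℂ) : ℂ :=
  (T * (Z - a1) / (1 - Y) - (1 - Y) * (Z - a2) * (Z - a3)) / T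

def symLaxYRhsDeriv (a2 a3 T Y Z Y' Z' : ℂ) : ℂ :=
  ((2 * (a2 + a3) * (Y - 1) * Y' - 2 * ((2 * Y - 1) * Y' * Z + (Y - 1) * Y * Z')) * T
    - ((a2 + a3) * (Y - 1) ^ 2 - 2 * (Y - 1) * Y * Z)) / T ^ 2 - Y'

def painleveVRhs (α β γ δ T Y Y' : ℂ) : ℂ :=
  (1 / (2 * Y) + 1 / (Y - 1)) * Y' ^ 2 - Y' / T + ((Y - 1) ^ 2 / T ^ 2) * (α * Y + β / Y)
    + γ * Y / T + δ * Y * (Y + 1) / (Y - 1)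

end

theorem hasDerivAt_symLaxYRhs (a2 a3 : ℂ) {y z : ℝ → ℂ} {y' z' : ℂ} {t : ℝ}
    (hy : HasDerivAt y y' t) (hz : HasDerivAt z z' t) (ht : (t : ℂ) ≠ 0) :
    HasDerivAt (fun s : ℝ => symLaxYRhs a2 a3 s (y s) (z s))
      (symLaxYRhsDeriv a2 a3 t (y t) (z t) y' z') t := by
  have hT : HasDerivAt (fun s : ℝ => (s : ℂ)) 1 t := (hasDerivAt_id t).ofReal_comp
  have hA : HasDerivAt (fun s => (a2 + a3) * (y s - 1) ^ 2 - (s : ℂ) * y s)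
      ((a2 + a3) * (2 * (y t - 1) * y') - (1 * y t + t * y')) t := by
    simpa using (((hy.sub_const 1).fun_pow 2).const_mul (a2 + a3)).fun_sub (hT.fun_mul hy)
  have hB : HasDerivAt (fun s => 2 * (y s - 1) * y s * z s)
      ((2 * y' * y t + 2 * (y t - 1) * y') * z t + 2 * (y t - 1) * y t * z') t :=
    (((hy.sub_const 1).const_mul 2).fun_mul hy).fun_mul hz
  refine ((hA.fun_div hT ht).fun_sub (hB.fun_div hT ht)).congr_deriv ?_
  simp only [symLaxYRhsDeriv]
  field_simp
  ring

theorem symLaxYRhsDeriv_eq_painleveVRhs (a1 a2 a3 T Y Z : ℂ) (hT : T ≠ 0) (hY0 : Y ≠ 0)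
    (hY1 : Y ≠ 1) :
    symLaxYRhsDeriv a2 a3 T Y Z (symLaxYRhs a2 a3 T Y Z) (symLaxZRhs a1 a2 a3 T Y Z) =
      painleveVRhs ((a2 - a3) ^ 2 / 2) (-(a2 + a3) ^ 2 / 2) (-1 - 2 * a1) (-1 / 2) T Y
        (symLaxYRhs a2 a3 T Y Z) := by
  have hY1' : Y - 1 ≠ 0 := sub_ne_zero.mpr hY1
  have h1Y : 1 - Y ≠ 0 := sub_ne_zero.mpr hY1.symm
  simp only [symLaxYRhsDeriv, symLaxYRhs, symLaxZRhs, painleveVRhs]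
  field_simp
  ring

/-- eliminating `z` from the symmetric Lax isomonodromy system
yields the fifth Painlevé equation. -/
theorem stmt_10 (a1 a2 a3 : ℂ) (I : Set ℝ) (hI : IsOpen I) (y z : ℝ → ℂ)
    (hyd : ∀ t ∈ I, DifferentiableAt ℝ y t)
    (hzd : ∀ t ∈ I, DifferentiableAt ℝ z t)
    (ht0 : ∀ t ∈ I, (t : ℂ) ≠ 0)
    (hy0 : ∀ t ∈ I, y t ≠ 0) (hy1 : ∀ t ∈ I, y t ≠ 1)
    (hy' : ∀ t ∈ I, deriv y t =
      ((a2 + a3) * (y t - 1)^2 - (t : ℂ) * y t) / (t : ℂ)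
        - 2 * (y t - 1) * y t * z t / (t : ℂ))
    (hz' : ∀ t ∈ I, deriv z t =
      ((t : ℂ) * (z t - a1) / (1 - y t) - (1 - y t) * (z t - a2) * (z t - a3))
        / (t : ℂ)) :
    ∀ t ∈ I, deriv (deriv y) t =
      (1 / (2 * y t) + 1 / (y t - 1)) * (deriv y t)^2 - deriv y t / (t : ℂ)
      + ((y t - 1)^2 / (t : ℂ)^2) *
          (((a2 - a3)^2 / 2) * y t + (-(a2 + a3)^2 / 2) / y t)
      + (-1 - 2 * a1) * y t / (t : ℂ)
      - (1/2) * y t * (y t + 1) / (y t - 1) := by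
  intro t ht
  have hy'_near : deriv y =ᶠ[𝓝 t] fun s => symLaxYRhs a2 a3 s (y s) (z s) :=
    eventually_of_mem (hI.mem_nhds ht) hy'
  have hy'' : deriv (deriv y) t =
      symLaxYRhsDeriv a2 a3 t (y t) (z t) (deriv y t) (deriv z t) := by
    rw [hy'_near.deriv_eq]
    exact (hasDerivAt_symLaxYRhs a2 a3 (hyd t ht).hasDerivAt (hzd t ht).hasDerivAt
      (ht0 t ht)).deriv
  calc deriv (deriv y) t
      = painleveVRhs ((a2 - a3) ^ 2 / 2) (-(a2 + a3) ^ 2 / 2) (-1 - 2 * a1) (-1 / 2) t (y t)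
          (deriv y t) := by
        rw [hy'', hz' t ht, hy' t ht]
        exact symLaxYRhsDeriv_eq_painleveVRhs a1 a2 a3 t (y t) (z t) (ht0 t ht) (hy0 t ht)
          (hy1 t ht)
    _ = _ := by
        simp only [painleveVRhs]
        ring
end

section
/- Let a₁, a₂ ∈ ℂ and let y, z : I → ℂ be differentiable on a real interval I with independent variable t ≠ 0 and y(t) ≠ 0. Set y₁ = t·y·(z−a₂) and y₂ = t(z−a₁)/y. Suppose y' = (y(2ty − 4z − 1) + 2t)/t and z' = 2(y₂ − y₁)/t. Then y satisfies y'' = (y')²/y − y'/t + (αy² + β)/t + γy³ + δ/y, with α = −8a₂, β = 4(1+2a₁), γ = 4, δ = −4. -/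
/-!
Multiply the equation for `y` by `t`, giving `t y' = 2 t y² - 4 y z - y + 2 t`, and differentiate
it. The resulting identity involves `z` and `z'`; the equation for `y` expresses `z` through
`y, y'`, and the equation for `z` expresses `z'` through `y, z`, so both can be eliminated, which
is a purely algebraic computation leaving the Painlevé equation.
-/

theorem painleveIII_of_lax {K : Type*} [Field K] {a₁ a₂ T Y Z Y₁ Z₁ Y₂ : K}
    (hT : T ≠ 0) (hY : Y ≠ 0)
    (hY₁ : Y₁ = (Y * (2 * T * Y - 4 * Z - 1) + 2 * T) / T)
    (hZ₁ : Z₁ = 2 * (T * (Z - a₁) / Y - T * Y * (Z - a₂)) / T)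
    (hY₂ : Y₁ + T * Y₂ =
      Y₁ * (2 * T * Y - 4 * Z - 1) + Y * (2 * Y + 2 * T * Y₁ - 4 * Z₁) + 2) :
    Y₂ = Y₁ ^ 2 / Y - Y₁ / T + ((-8 * a₂) * Y ^ 2 + 4 * (1 + 2 * a₁)) / T
      + 4 * Y ^ 3 + (-4) / Y := by
  rw [eq_div_iff hT] at hY₁
  rw [eq_div_iff hT, div_sub' hY, mul_div_assoc', eq_div_iff hY] at hZ₁
  field_simp
  refine mul_left_cancel₀ hT ?_
  linear_combination (-2 * T + 2 * T * Y ^ 2 - T * Y₁) * hY₁ - 4 * Y * hZ₁ + Y * T * hY₂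

/-- No differentiability of `f'` is assumed: near `t` it agrees with `s ↦ P s / s`. -/
theorem deriv_add_mul_deriv_deriv {f P : ℝ → ℂ} {U : Set ℝ} {t : ℝ} {P' : ℂ}
    (hU : IsOpen U) (ht : t ∈ U) (h0 : ∀ s ∈ U, (s : ℂ) ≠ 0)
    (hf : ∀ s ∈ U, (s : ℂ) * deriv f s = P s) (hP : HasDerivAt P P' t) :
    deriv f t + t * deriv (deriv f) t = P' := by
  have hcast : HasDerivAt (fun s : ℝ => (s : ℂ)) 1 t := (hasDerivAt_id t).ofReal_comp
  have hfP : deriv f =ᶠ[nhds t] fun s => P s / s :=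
    Filter.eventually_of_mem (hU.mem_nhds ht) fun s hs => by
      rw [eq_div_iff (h0 s hs), mul_comm]
      exact hf s hs
  have hdiff : DifferentiableAt ℝ (deriv f) t :=
    hfP.differentiableAt_iff.mpr (hP.div hcast (h0 t ht)).differentiableAt
  have hPeq : (fun s : ℝ => (s : ℂ) * deriv f s) =ᶠ[nhds t] P :=
    Filter.eventually_of_mem (hU.mem_nhds ht) hf
  simpa using ((hcast.mul hdiff.hasDerivAt).congr_of_eventuallyEq hPeq.symm).unique hP

theorem hasDerivAt_lax_rhs {y z : ℝ → ℂ} {t : ℝ} {y' z' : ℂ}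
    (hy : HasDerivAt y y' t) (hz : HasDerivAt z z' t) :
    HasDerivAt (fun s : ℝ => y s * (2 * s * y s - 4 * z s - 1) + 2 * s)
      (y' * (2 * t * y t - 4 * z t - 1) + y t * (2 * y t + 2 * t * y' - 4 * z') + 2) t := by
  have hcast : HasDerivAt (fun s : ℝ => (s : ℂ)) 1 t := (hasDerivAt_id t).ofReal_comp
  have h2t := hcast.const_mul (2 : ℂ)
  exact ((hy.fun_mul (((h2t.fun_mul hy).fun_sub (hz.const_mul 4)).sub_const 1)).fun_add
    h2t).congr_deriv (by ring)

/-- eliminating `z` from the symmetric Lax isomonodromy system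
yields the third Painlevé equation of type `D₆`. -/
theorem stmt_11 (a1 a2 : ℂ) (I : Set ℝ) (hI : IsOpen I) (y z : ℝ → ℂ)
    (hyd : ∀ t ∈ I, DifferentiableAt ℝ y t)
    (hzd : ∀ t ∈ I, DifferentiableAt ℝ z t)
    (ht0 : ∀ t ∈ I, (t : ℂ) ≠ 0)
    (hy0 : ∀ t ∈ I, y t ≠ 0)
    (hy' : ∀ t ∈ I, deriv y t =
      (y t * (2 * (t : ℂ) * y t - 4 * z t - 1) + 2 * (t : ℂ)) / (t : ℂ))
    (hz' : ∀ t ∈ I, deriv z t =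
      2 * ((t : ℂ) * (z t - a1) / y t - (t : ℂ) * y t * (z t - a2)) / (t : ℂ)) :
    ∀ t ∈ I, deriv (deriv y) t =
      (deriv y t)^2 / y t - deriv y t / (t : ℂ)
      + ((-8 * a2) * (y t)^2 + 4 * (1 + 2 * a1)) / (t : ℂ)
      + 4 * (y t)^3 + (-4) / y t := by
  intro t ht
  have hty' : ∀ s ∈ I, (s : ℂ) * deriv y s = y s * (2 * s * y s - 4 * z s - 1) + 2 * s :=
    fun s hs => by rw [hy' s hs, mul_div_cancel₀ _ (ht0 s hs)]
  have hdifferentiated := deriv_add_mul_deriv_deriv hI ht ht0 hty'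
    (hasDerivAt_lax_rhs (hyd t ht).hasDerivAt (hzd t ht).hasDerivAt)
  exact painleveIII_of_lax (ht0 t ht) (hy0 t ht) (hy' t ht) (hz' t ht) hdifferentiated
end

section
/- Let a₁ ∈ ℂ and let y, z : I → ℂ be differentiable on a real interval I with independent variable t ≠ 0 and y(t) ≠ 0. Set y₁ = −y and y₂ = −t(z−a₁)/y. Suppose y' = −1 − 2yz/t and z' = (y₂ − y₁)/t. Then y satisfies y'' = (y')²/y − y'/t − 2y²/t² + β/(4t) − 1/y, with β = −4 − 8a₁. -/
/-!
Differentiating `t y' = -t - 2 y z` gives `t y'' + y' = -1 - 2 (y' z + y z')`. Substituting `z'` from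
the second equation and `z = -t (1 + y') / (2 y)` from the first leaves an equation in `y, y', y''`
alone, which rearranges to `P_III(D₇)`.
-/

theorem HasDerivAt.div_ofReal {f : ℝ → ℂ} {f' : ℂ} {t : ℝ} (hf : HasDerivAt f f' t)
    (ht : (t : ℂ) ≠ 0) :
    HasDerivAt (fun s : ℝ => f s / (s : ℂ)) ((f' * t - f t) / (t : ℂ) ^ 2) t := by
  have hc : HasDerivAt (fun s : ℝ => (s : ℂ)) 1 t := by
    simpa using (hasDerivAt_id t).ofReal_comp
  simpa using hf.fun_div hc ht

theorem deriv_deriv_eq_of_deriv_eq {I : Set ℝ} (hI : IsOpen I) {y z : ℝ → ℂ}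
    (hy' : ∀ t ∈ I, deriv y t = -1 - 2 * y t * z t / (t : ℂ)) {t : ℝ} (ht : t ∈ I)
    (hyd : DifferentiableAt ℝ y t) (hzd : DifferentiableAt ℝ z t) (ht0 : (t : ℂ) ≠ 0) :
    deriv (deriv y) t =
      -((2 * deriv y t * z t + 2 * y t * deriv z t) * t - 2 * y t * z t) / (t : ℂ) ^ 2 := by
  have hyz : HasDerivAt (fun s : ℝ => 2 * y s * z s)
      (2 * deriv y t * z t + 2 * y t * deriv z t) t :=
    (hyd.hasDerivAt.const_mul 2).mul hzd.hasDerivAt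
  have heq : deriv y =ᶠ[nhds t] fun s : ℝ => -1 - 2 * y s * z s / (s : ℂ) :=
    Filter.eventually_of_mem (hI.mem_nhds ht) hy'
  rw [heq.deriv_eq, ((hyz.div_ofReal ht0).const_sub (-1)).deriv, neg_div]

theorem painleve_III_D7_of_lax_system {a1 t y z y' z' y'' : ℂ} (ht : t ≠ 0) (hy : y ≠ 0)
    (hy' : y' = -1 - 2 * y * z / t) (hz' : z' = (-t * (z - a1) / y - -y) / t)
    (hy'' : y'' = -((2 * y' * z + 2 * y * z') * t - 2 * y * z) / t ^ 2) :
    y'' = y' ^ 2 / y - y' / t - 2 * y ^ 2 / t ^ 2 + (-4 - 8 * a1) / (4 * t) - 1 / y := by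
  subst hy'' hz' hy'
  field_simp
  ring

/-- eliminating `z` from the symmetric Lax isomonodromy system
yields the degenerate third Painlevé equation of type `D₇`. -/
theorem stmt_12 (a1 : ℂ) (I : Set ℝ) (hI : IsOpen I) (y z : ℝ → ℂ)
    (hyd : ∀ t ∈ I, DifferentiableAt ℝ y t)
    (hzd : ∀ t ∈ I, DifferentiableAt ℝ z t)
    (ht0 : ∀ t ∈ I, (t : ℂ) ≠ 0)
    (hy0 : ∀ t ∈ I, y t ≠ 0)
    (hy' : ∀ t ∈ I, deriv y t = -1 - 2 * y t * z t / (t : ℂ))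
    (hz' : ∀ t ∈ I, deriv z t =
      (-(t : ℂ) * (z t - a1) / y t - (-(y t))) / (t : ℂ)) :
    ∀ t ∈ I, deriv (deriv y) t =
      (deriv y t)^2 / y t - deriv y t / (t : ℂ)
      - 2 * (y t)^2 / (t : ℂ)^2 + (-4 - 8 * a1) / (4 * (t : ℂ)) - 1 / y t := fun t ht =>
  painleve_III_D7_of_lax_system (ht0 t ht) (hy0 t ht) (hy' t ht) (hz' t ht)
    (deriv_deriv_eq_of_deriv_eq hI hy' ht (hyd t ht) (hzd t ht) (ht0 t ht))
end
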